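/- Let |ξ⟩ be a unit vector on X⊗Y such that F(|Φ⟩⟨Φ|, ξ^Y) ≥ 1-ε for some fixed pure state |Φ⟩ on Y, where ξ^Y = Tr_X |ξ⟩⟨ξ|. Then F(|ξ⟩⟨ξ|, ξ^X ⊗ ξ^Y) ≥ (1-ε)³ ≥ 1 - 3ε. -/

import Mathlib

open scoped Kronecker ComplexOrder
open scoped Classical
open Matrix

noncomputable section

/-- Square root of a positive semidefinite matrix (junk value `0` otherwise). -/
noncomputable def psqrt {n : Type*} [Fintype n] [DecidableEq n] (A : Matrix n n ℂ) :
    Matrix n n ℂ :=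
  if h : A.PosSemidef then
    (h.1.eigenvectorUnitary : Matrix n n ℂ) * diagonal ((↑) ∘ (√·) ∘ h.1.eigenvalues) *
      (star h.1.eigenvectorUnitary : Matrix n n ℂ) else 0

/-- Schatten 1-norm (trace norm) `‖A‖₁ = Tr √(AᴴA)`. -/
noncomputable def traceNorm {n : Type*} [Fintype n] [DecidableEq n] (A : Matrix n n ℂ) : ℝ :=
  ((psqrt (Aᴴ * A)).trace).re

/-- Fidelity `F(ρ,ξ) = ‖√ρ √ξ‖₁ = Tr √(√ρ ξ √ρ)`. -/
noncomputable def fidelity {n : Type*} [Fintype n] [DecidableEq n] (ρ ξ : Matrix n n ℂ) : ℝ :=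
  traceNorm (psqrt ρ * psqrt ξ)

/-- Von Neumann entropy `S(ρ) = -Tr ρ log₂ ρ`, via eigenvalues (junk `0` if not Hermitian). -/
noncomputable def vnEntropy {n : Type*} [Fintype n] [DecidableEq n] (ρ : Matrix n n ℂ) : ℝ :=
  if h : ρ.IsHermitian then -∑ i, (h.eigenvalues i) * Real.logb 2 (h.eigenvalues i) else 0

/-- A density matrix: positive semidefinite with unit trace. -/
def IsDensity {n : Type*} [Fintype n] [DecidableEq n] (ρ : Matrix n n ℂ) : Prop :=
  ρ.PosSemidef ∧ ρ.trace = 1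

/-- Partial trace over the second (right) tensor factor. -/
def ptraceRight {a b : Type*} [Fintype b] (M : Matrix (a × b) (a × b) ℂ) : Matrix a a ℂ :=
  Matrix.of fun i j => ∑ k, M (i, k) (j, k)

/-- Partial trace over the first (left) tensor factor. -/
def ptraceLeft {a b : Type*} [Fintype a] (M : Matrix (a × b) (a × b) ℂ) : Matrix b b ℂ :=
  Matrix.of fun i j => ∑ k, M (k, i) (k, j)

/-- Quantum mutual information `I(A:B) = S(A) + S(B) - S(AB)`. -/
noncomputable def mutualInfo {a b : Type*} [Fintype a] [DecidableEq a] [Fintype b] [DecidableEq b]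
    (ρ : Matrix (a × b) (a × b) ℂ) : ℝ :=
  vnEntropy (ptraceRight ρ) + vnEntropy (ptraceLeft ρ) - vnEntropy ρ

/-- Outer product `|ψ⟩⟨ψ|` of a vector. -/
def vecOuter {n : Type*} (ψ : n → ℂ) : Matrix n n ℂ :=
  Matrix.of fun i j => ψ i * star (ψ j)

/-- Binary (Shannon) entropy, base 2. -/
noncomputable def binEnt (x : ℝ) : ℝ :=
  -(x * Real.logb 2 x) - (1 - x) * Real.logb 2 (1 - x)

/-!
Write `ξ = vec X`. Then `ξ^Y = X Xᴴ`, `ξ^X = (Xᴴ X)ᵀ`, and the fidelity of a pure state with a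
positive matrix is `F(|ψ⟩⟨ψ|, σ) = √⟨ψ|σ|ψ⟩`. Hence `F(|Φ⟩⟨Φ|, ξ^Y) = √t` with
`t = ⟨Φ|ξ^Y|Φ⟩`, while `F(|ξ⟩⟨ξ|, ξ^X ⊗ ξ^Y) = √(Tr (ξ^Y)³)`. The claim follows from
`t³ ≤ ⟨Φ|(ξ^Y)³|Φ⟩ ≤ Tr (ξ^Y)³`.
-/

open scoped MatrixOrder

section cauchySchwarz
variable {n : Type*} [Fintype n]

lemma star_mulVec_dotProduct (A : Matrix n n ℂ) (u v : n → ℂ) :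
    star (A *ᵥ u) ⬝ᵥ v = star u ⬝ᵥ (Aᴴ *ᵥ v) := by
  rw [star_mulVec, ← dotProduct_mulVec]

lemma norm_dotProduct_sq_le (u v : n → ℂ) :
    ‖star u ⬝ᵥ v‖ ^ 2 ≤ (star u ⬝ᵥ u).re * (star v ⬝ᵥ v).re := by
  have h := inner_mul_inner_self_le (𝕜 := ℂ) (WithLp.toLp 2 u) (WithLp.toLp 2 v)
  rw [norm_inner_symm (WithLp.toLp 2 v)] at h
  simp only [EuclideanSpace.inner_toLp_toLp, dotProduct_comm _ (star _)] at h
  rw [sq]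
  exact h

lemma norm_dotProduct_conjTranspose_mul_mulVec_sq_le (A B : Matrix n n ℂ) (Φ : n → ℂ) :
    ‖star Φ ⬝ᵥ ((Aᴴ * B) *ᵥ Φ)‖ ^ 2 ≤
      (star Φ ⬝ᵥ ((Aᴴ * A) *ᵥ Φ)).re * (star Φ ⬝ᵥ ((Bᴴ * B) *ᵥ Φ)).re := by
  simpa only [star_mulVec_dotProduct, mulVec_mulVec] using norm_dotProduct_sq_le (A *ᵥ Φ) (B *ᵥ Φ)

end cauchySchwarz

section psqrt
variable {n : Type*} [Fintype n] [DecidableEq n]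

lemma psqrt_eq_cfcSqrt {A : Matrix n n ℂ} (hA : A.PosSemidef) : psqrt A = CFC.sqrt A := by
  rw [psqrt, dif_pos hA, CFC.sqrt_eq_cfc, cfc_nnreal_eq_real _ A hA.nonneg, hA.1.cfc_eq]
  simp only [IsHermitian.cfc, Unitary.conjStarAlgAut_apply, Real.coe_sqrt, Real.coe_toNNReal']
  congr 3
  funext i
  simp [max_eq_left (hA.eigenvalues_nonneg i)]

lemma posSemidef_psqrt (A : Matrix n n ℂ) : (psqrt A).PosSemidef := by
  by_cases hA : A.PosSemidef
  · rw [psqrt_eq_cfcSqrt hA]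
    exact (CFC.sqrt_nonneg A).posSemidef
  · rw [psqrt, dif_neg hA]
    exact .zero

lemma psqrt_mul_self {A : Matrix n n ℂ} (hA : A.PosSemidef) : psqrt A * psqrt A = A := by
  rw [psqrt_eq_cfcSqrt hA]
  exact CFC.sqrt_mul_sqrt_self A hA.nonneg

lemma psqrt_eq_of_mul_self {A B : Matrix n n ℂ} (hB : B.PosSemidef) (h : B * B = A) :
    psqrt A = B := by
  have hA : A.PosSemidef := by
    rw [← h]
    simpa only [hB.1.eq] using posSemidef_conjTranspose_mul_self B
  rw [psqrt_eq_cfcSqrt hA]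
  exact CFC.sqrt_unique h hB.nonneg

end psqrt

lemma vecOuter_eq_vecMulVec {n : Type*} (ψ : n → ℂ) : vecOuter ψ = vecMulVec ψ (star ψ) := rfl

section vecOuter
variable {n : Type*} [Fintype n]

lemma posSemidef_vecOuter (ψ : n → ℂ) : (vecOuter ψ).PosSemidef :=
  posSemidef_vecMulVec_self_star ψ

lemma vecOuter_mul_self (ψ : n → ℂ) :
    vecOuter ψ * vecOuter ψ = (star ψ ⬝ᵥ ψ) • vecOuter ψ := by
  rw [vecOuter_eq_vecMulVec, vecMulVec_mul_vecMulVec, vecMulVec_smul]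

lemma mul_vecOuter_mul_conjTranspose (B : Matrix n n ℂ) (ψ : n → ℂ) :
    B * vecOuter ψ * Bᴴ = vecOuter (B *ᵥ ψ) := by
  rw [vecOuter_eq_vecMulVec, mul_vecMulVec, vecMulVec_mul, ← star_mulVec]
  rfl

lemma isStarProjection_vecOuter {ψ : n → ℂ} (hψ : star ψ ⬝ᵥ ψ = 1) :
    IsStarProjection (vecOuter ψ) :=
  ⟨by rw [IsIdempotentElem, vecOuter_mul_self, hψ, one_smul], (posSemidef_vecOuter ψ).1⟩

variable [DecidableEq n]

lemma psqrt_vecOuter_of_unit {ψ : n → ℂ} (hψ : star ψ ⬝ᵥ ψ = 1) :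
    psqrt (vecOuter ψ) = vecOuter ψ :=
  psqrt_eq_of_mul_self (posSemidef_vecOuter ψ) (isStarProjection_vecOuter hψ).isIdempotentElem

lemma psqrt_vecOuter (v : n → ℂ) :
    psqrt (vecOuter v) = (√(star v ⬝ᵥ v).re)⁻¹ • vecOuter v := by
  rcases eq_or_ne v 0 with rfl | hv
  · simp [vecOuter_eq_vecMulVec, psqrt_eq_of_mul_self .zero (mul_zero (0 : Matrix n n ℂ))]
  set s := (star v ⬝ᵥ v).re
  have hs : star v ⬝ᵥ v = s := by
    obtain ⟨r, -, hr⟩ := RCLike.nonneg_iff_exists_ofReal.mp (dotProduct_star_self_nonneg v)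
    simp [s, ← hr]
  have hs_pos : 0 < s := by
    have h0 : star v ⬝ᵥ v ≠ 0 := mt dotProduct_star_self_eq_zero.mp hv
    have h1 : 0 ≤ star v ⬝ᵥ v := dotProduct_star_self_nonneg v
    rw [hs] at h0 h1
    exact (Complex.zero_le_real.mp h1).lt_of_ne (by exact_mod_cast h0.symm)
  refine psqrt_eq_of_mul_self ((posSemidef_vecOuter v).smul (by positivity)) ?_
  rw [smul_mul_smul, vecOuter_mul_self, hs, ← Complex.coe_smul, smul_smul,
    ← sq, inv_pow, Real.sq_sqrt hs_pos.le, ← Complex.ofReal_mul,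
    inv_mul_cancel₀ hs_pos.ne', Complex.ofReal_one, one_smul]

lemma re_trace_psqrt_vecOuter (v : n → ℂ) :
    (psqrt (vecOuter v)).trace.re = √(star v ⬝ᵥ v).re := by
  rw [psqrt_vecOuter, trace_smul, vecOuter_eq_vecMulVec, trace_vecMulVec, dotProduct_comm,
    Complex.real_smul, Complex.re_ofReal_mul, ← div_eq_inv_mul, Real.div_sqrt]

theorem fidelity_vecOuter_left {ψ : n → ℂ} (hψ : star ψ ⬝ᵥ ψ = 1) {σ : Matrix n n ℂ}
    (hσ : σ.PosSemidef) : fidelity (vecOuter ψ) σ = √(star ψ ⬝ᵥ (σ *ᵥ ψ)).re := by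
  set S := psqrt σ
  have hS : Sᴴ = S := (posSemidef_psqrt σ).1
  have hPS : (vecOuter ψ * S)ᴴ * (vecOuter ψ * S) = vecOuter (S *ᵥ ψ) := by
    rw [conjTranspose_mul, hS, (posSemidef_vecOuter ψ).1.eq, ← mul_vecOuter_mul_conjTranspose,
      hS, Matrix.mul_assoc, ← Matrix.mul_assoc (vecOuter ψ), vecOuter_mul_self, hψ, one_smul,
      Matrix.mul_assoc]
  rw [fidelity, traceNorm, psqrt_vecOuter_of_unit hψ, hPS, re_trace_psqrt_vecOuter,
    star_mulVec_dotProduct, hS, mulVec_mulVec, psqrt_mul_self hσ]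

end vecOuter

section moments
variable {n : Type*} [Fintype n] [DecidableEq n]

/-- A discrete Jensen inequality, from two Cauchy–Schwarz steps: `⟨σ⟩² ≤ ⟨σ²⟩` and
`⟨σ²⟩² = ⟨√σ · σ^(3/2)⟩² ≤ ⟨σ⟩⟨σ³⟩`. -/
theorem re_dotProduct_mulVec_pow_three_le {σ : Matrix n n ℂ} (hσ : σ.PosSemidef) {Φ : n → ℂ}
    (hΦ : star Φ ⬝ᵥ Φ = 1) :
    (star Φ ⬝ᵥ (σ *ᵥ Φ)).re ^ 3 ≤ (star Φ ⬝ᵥ ((σ ^ 3) *ᵥ Φ)).re := by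
  set S := psqrt σ
  have hS : Sᴴ = S := (posSemidef_psqrt σ).1
  have hS2 : S ^ 2 = σ := (sq S).trans (psqrt_mul_self hσ)
  set t := (star Φ ⬝ᵥ (σ *ᵥ Φ)).re
  set r := (star Φ ⬝ᵥ ((σ ^ 2) *ᵥ Φ)).re
  set q := (star Φ ⬝ᵥ ((σ ^ 3) *ᵥ Φ)).re
  have re_sq_le (z : ℂ) : z.re ^ 2 ≤ ‖z‖ ^ 2 := by
    rw [sq, Complex.sq_norm]
    exact Complex.re_sq_le_normSq z
  have htr : t ^ 2 ≤ r := by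
    have h := norm_dotProduct_conjTranspose_mul_mulVec_sq_le 1 σ Φ
    rw [conjTranspose_one, one_mul, one_mul, one_mulVec, hΦ, Complex.one_re, one_mul, hσ.1.eq,
      ← sq] at h
    exact (re_sq_le _).trans h
  have hrq : r ^ 2 ≤ t * q := by
    have h := norm_dotProduct_conjTranspose_mul_mulVec_sq_le S (S ^ 3) Φ
    have h4 : S * S ^ 3 = σ ^ 2 := by rw [← pow_succ', ← hS2, ← pow_mul]
    have h6 : S ^ 3 * S ^ 3 = σ ^ 3 := by rw [← pow_add, ← hS2, ← pow_mul]
    rw [conjTranspose_pow, hS, h4, h6, ← sq, hS2] at h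
    exact (re_sq_le _).trans h
  have ht : 0 ≤ t := hσ.re_dotProduct_nonneg Φ
  have hq : 0 ≤ q := (hσ.pow 3).re_dotProduct_nonneg Φ
  rcases ht.eq_or_lt with ht0 | ht0
  · rw [← ht0]
    simpa using hq
  refine le_of_mul_le_mul_left ?_ ht0
  calc t * t ^ 3 = (t ^ 2) ^ 2 := by ring
    _ ≤ r ^ 2 := pow_le_pow_left₀ (sq_nonneg t) htr 2
    _ ≤ t * q := hrq

-- `Tr M - ⟨Φ|M|Φ⟩ = Tr (√M (1 - |Φ⟩⟨Φ|) √M) ≥ 0`.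
theorem re_dotProduct_mulVec_le_re_trace {M : Matrix n n ℂ} (hM : M.PosSemidef) {Φ : n → ℂ}
    (hΦ : star Φ ⬝ᵥ Φ = 1) : (star Φ ⬝ᵥ (M *ᵥ Φ)).re ≤ M.trace.re := by
  set S := psqrt M
  have hS : Sᴴ = S := (posSemidef_psqrt M).1
  have hP : (1 - vecOuter Φ).PosSemidef :=
    (isStarProjection_vecOuter hΦ).one_sub_nonneg.posSemidef
  have h := (hP.mul_mul_conjTranspose_same S).trace_nonneg
  rw [hS, trace_mul_cycle, psqrt_mul_self hM, Matrix.mul_sub, Matrix.mul_one, trace_sub,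
    vecOuter_eq_vecMulVec, mul_vecMulVec, trace_vecMulVec, dotProduct_comm, sub_nonneg] at h
  exact (Complex.le_def.mp h).1

end moments

section marginals
variable {x y : Type*} (X : Matrix y x ℂ)

lemma ptraceLeft_vecOuter_vec [Fintype x] : ptraceLeft (vecOuter (vec X)) = X * Xᴴ := by
  ext b b'
  simp [ptraceLeft, vecOuter, vec, mul_apply]

lemma ptraceRight_vecOuter_vec [Fintype y] : ptraceRight (vecOuter (vec X)) = (Xᴴ * X)ᵀ := by
  ext a a'
  simp [ptraceRight, vecOuter, vec, mul_apply, mul_comm]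

lemma star_vec_dotProduct_kronecker_mulVec_vec [Fintype x] [Fintype y] (M : Matrix x x ℂ)
    (N : Matrix y y ℂ) :
    star (vec X) ⬝ᵥ ((M ⊗ₖ N) *ᵥ vec X) = (Xᴴ * (N * X * Mᵀ)).trace := by
  rw [kronecker_mulVec_vec, star_vec_dotProduct_vec]

variable [Fintype x] [DecidableEq x] [Fintype y] [DecidableEq y]

theorem fidelity_vecOuter_vec_kronecker_marginals (hX : star (vec X) ⬝ᵥ vec X = 1) :
    fidelity (vecOuter (vec X))
        (ptraceRight (vecOuter (vec X)) ⊗ₖ ptraceLeft (vecOuter (vec X))) =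
      √((X * Xᴴ) ^ 3).trace.re := by
  rw [ptraceRight_vecOuter_vec, ptraceLeft_vecOuter_vec,
    fidelity_vecOuter_left hX ((posSemidef_conjTranspose_mul_self X).transpose.kronecker
      (posSemidef_self_mul_conjTranspose X)),
    star_vec_dotProduct_kronecker_mulVec_vec, transpose_transpose, trace_mul_comm]
  simp only [pow_succ, pow_zero, Matrix.one_mul, Matrix.mul_assoc]

end marginals

theorem fidelity_decoupling_of_marginal_fidelity_general {x y : Type*} [Fintype x] [DecidableEq x]
    [Fintype y] [DecidableEq y] (ξ : x × y → ℂ) (Φ : y → ℂ) (ε : ℝ)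
    (hξ : ∑ p, star (ξ p) * ξ p = 1) (hΦ : ∑ b, star (Φ b) * Φ b = 1)
    (hε1 : ε ≤ 1)
    (hfid : fidelity (vecOuter Φ) (ptraceLeft (vecOuter ξ)) ≥ 1 - ε) :
    fidelity (vecOuter ξ) ((ptraceRight (vecOuter ξ)) ⊗ₖ (ptraceLeft (vecOuter ξ)))
        ≥ (1 - ε) ^ 3 ∧ (1 - ε) ^ 3 ≥ 1 - 3 * ε := by
  obtain ⟨X, rfl⟩ := vec_bijective.surjective ξ
  have hσ : (X * Xᴴ).PosSemidef := posSemidef_self_mul_conjTranspose X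
  rw [ptraceLeft_vecOuter_vec, fidelity_vecOuter_left hΦ hσ] at hfid
  have hcube := (re_dotProduct_mulVec_pow_three_le hσ hΦ).trans
    (re_dotProduct_mulVec_le_re_trace (hσ.pow 3) hΦ)
  refine ⟨?_, by nlinarith [mul_nonneg (sq_nonneg ε) (by linarith : (0 : ℝ) ≤ 3 - ε)]⟩
  rw [fidelity_vecOuter_vec_kronecker_marginals X hξ]
  set t := (star Φ ⬝ᵥ ((X * Xᴴ) *ᵥ Φ)).re
  have ht : 0 ≤ t := hσ.re_dotProduct_nonneg Φ
  calc (1 - ε) ^ 3 ≤ √t ^ 3 := pow_le_pow_left₀ (by linarith) hfid 3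
    _ ≤ √((X * Xᴴ) ^ 3).trace.re := Real.le_sqrt_of_sq_le <| by
      rwa [← pow_mul, mul_comm, pow_mul, Real.sq_sqrt ht]

/-- If the `Y`-marginal of a pure bipartite state `|ξ⟩` has fidelity at least `1-ε` with a fixed
pure state `|Φ⟩`, then `|ξ⟩⟨ξ|` has fidelity at least `(1-ε)³ ≥ 1-3ε` with the product of its
marginals. -/
theorem fidelity_decoupling_of_marginal_fidelity {x y : Type*} [Fintype x] [DecidableEq x]
    [Fintype y] [DecidableEq y] (ξ : x × y → ℂ) (Φ : y → ℂ) (ε : ℝ)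
    (hξ : ∑ p, star (ξ p) * ξ p = 1) (hΦ : ∑ b, star (Φ b) * Φ b = 1)
    (hε0 : 0 ≤ ε) (hε1 : ε ≤ 1)
    (hfid : fidelity (vecOuter Φ) (ptraceLeft (vecOuter ξ)) ≥ 1 - ε) :
    fidelity (vecOuter ξ) ((ptraceRight (vecOuter ξ)) ⊗ₖ (ptraceLeft (vecOuter ξ)))
        ≥ (1 - ε) ^ 3 ∧ (1 - ε) ^ 3 ≥ 1 - 3 * ε :=
  fidelity_decoupling_of_marginal_fidelity_general ξ Φ ε hξ hΦ hε1 hfid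

end
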